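/- For every natural number n ≥ 1, the constant Laurent coefficient of (z + z^{-1} + w + w^{-1} + z w^{-1} + z^{-1} w)^n, namely (2π)^{-2} ∫₀^{2π} ∫₀^{2π} (e^{iθ} + e^{-iθ} + e^{iφ} + e^{-iφ} + e^{i(θ−φ)} + e^{-i(θ−φ)})^n dθ dφ, equals Σ_{i} Σ_{l} Σ_{j} C(n,i) · C(i,l) · C(l, (l+n−i−2j)/2) · C(i−l, (2i+2j−l−n)/2) · C(n−i, j), where the sum runs over integers 0 ≤ i ≤ n, 0 ≤ l ≤ i, 0 ≤ j ≤ n−i such that i is even, l + n is even, and n − i − 2j ≤ l ≤ n − 2j, with the convention C(a,b) = 0 when b > a or when b is negative, and C denotes the binomial coefficient. -/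

import Mathlib

/-!
Expanding `(z + z⁻¹ + w + w⁻¹ + z w⁻¹ + z⁻¹ w)ⁿ` with the binomial theorem, after grouping it as
`((z⁻¹ + z) + (z⁻¹ w + z w⁻¹)) + (w⁻¹ + w)`, writes it as a finite sum of Laurent monomials
`zᵖ wᵠ` with five summation indices `i, l, j, a, b`. On the torus `z = e^{iθ}`, `w = e^{iφ}` each
monomial averages to `1` if `p = q = 0` and to `0` otherwise, so the torus average is the sum of
the coefficients with `p = q = 0`. These two linear conditions determine `a` and `b` from
`i, l, j`, which collapses the two inner sums to the factors `C(l, ·) C(i - l, ·)` of the formula;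
the parity conditions say that `a` and `b` are integers, and the range condition on `j` only
discards terms in which one of these binomial coefficients already vanishes.
-/

/-- Binomial coefficient `C(a, b)` with an integer lower argument, with the convention
that `C(a, b) = 0` when `b` is negative (and, via `Nat.choose`, when `b > a`). -/
def intChoose (a : ℕ) (b : ℤ) : ℕ :=
  if 0 ≤ b then Nat.choose a b.toNat else 0

open Finset Complex
open scoped Real

theorem continuous_exp_mul_I_zpow (k : ℤ) : Continuous fun t : ℝ => exp (I * t) ^ k :=
  (by fun_prop : Continuous fun t : ℝ => exp (I * t)).zpow₀ k fun _ =>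
    Or.inl (Complex.exp_ne_zero _)

theorem integral_exp_mul_I_zpow (k : ℤ) :
    ∫ t in (0 : ℝ)..2 * π, exp (I * t) ^ k = if k = 0 then 2 * (π : ℂ) else 0 := by
  split_ifs with hk
  · simp [hk]
  · have hc : I * k ≠ 0 := by simp [hk]
    simp_rw [← exp_int_mul, ← mul_assoc, mul_comm (k : ℂ) I]
    rw [integral_exp_mul_complex hc]
    have h2π : I * k * ((2 * π : ℝ) : ℂ) = k * (2 * π * I) := by push_cast; ring
    rw [h2π, exp_int_mul_two_pi_mul_I]
    simp

theorem integral_sum_mul_exp_mul_I_zpow {ι : Type*} (s : Finset ι) (c : ι → ℂ) (p : ι → ℤ) :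
    ∫ t in (0 : ℝ)..2 * π, ∑ k ∈ s, c k * exp (I * t) ^ p k =
      2 * (π : ℂ) * ∑ k ∈ s with p k = 0, c k := by
  rw [intervalIntegral.integral_finsetSum fun k _ =>
    ((continuous_exp_mul_I_zpow (p k)).const_mul (c k)).intervalIntegrable _ _, sum_filter, mul_sum]
  refine sum_congr rfl fun k _ => ?_
  rw [intervalIntegral.integral_const_mul, integral_exp_mul_I_zpow]
  split_ifs <;> ring

theorem integral_integral_sum_mul_exp_mul_I_zpow {ι : Type*} (s : Finset ι) (c : ι → ℂ)
    (p q : ι → ℤ) :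
    ∫ θ in (0 : ℝ)..2 * π, ∫ φ in (0 : ℝ)..2 * π,
        ∑ k ∈ s, c k * exp (I * θ) ^ p k * exp (I * φ) ^ q k =
      (2 * (π : ℂ)) ^ 2 * ∑ k ∈ s with p k = 0 ∧ q k = 0, c k := by
  simp only [integral_sum_mul_exp_mul_I_zpow, intervalIntegral.integral_const_mul, filter_filter,
    and_comm]
  ring

/-- A term of the expansion is indexed by `⟨i, l, j, a, b⟩`: `i` factors are taken from
`(z⁻¹ + z) + (z⁻¹ w + z w⁻¹)`, `l` of them from `z⁻¹ + z` and `a` of those equal to `z⁻¹`,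
`b` of the other `i - l` equal to `z⁻¹ w`, and `j` of the remaining `n - i` factors `w⁻¹ + w`
equal to `w⁻¹`. -/
def dP3Terms (n : ℕ) : Finset (Σ _ : ℕ, Σ _ : ℕ, Σ _ : ℕ, ℕ × ℕ) :=
  (range (n + 1)).sigma fun i => (range (i + 1)).sigma fun l =>
    (range (n - i + 1)).sigma fun _ => range (l + 1) ×ˢ range (i - l + 1)

def dP3Coeff (n : ℕ) : (Σ _ : ℕ, Σ _ : ℕ, Σ _ : ℕ, ℕ × ℕ) → ℕ
  | ⟨i, l, j, a, b⟩ => n.choose i * i.choose l * l.choose a * (i - l).choose b * (n - i).choose j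

def dP3ExpZ : (Σ _ : ℕ, Σ _ : ℕ, Σ _ : ℕ, ℕ × ℕ) → ℤ
  | ⟨i, _, _, a, b⟩ => i - 2 * a - 2 * b

def dP3ExpW (n : ℕ) : (Σ _ : ℕ, Σ _ : ℕ, Σ _ : ℕ, ℕ × ℕ) → ℤ
  | ⟨i, l, j, _, b⟩ => n + l - 2 * i + 2 * b - 2 * j

theorem dP3_pow_eq_sum {K : Type*} [Field K] {z w : K} (hz : z ≠ 0) (hw : w ≠ 0) (n : ℕ) :
    (z + z⁻¹ + w + w⁻¹ + z * w⁻¹ + z⁻¹ * w) ^ n =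
      ∑ x ∈ dP3Terms n, (dP3Coeff n x : K) * z ^ dP3ExpZ x * w ^ dP3ExpW n x := by
  have hsplit : z + z⁻¹ + w + w⁻¹ + z * w⁻¹ + z⁻¹ * w =
      ((z⁻¹ + z) + (z⁻¹ * w + z * w⁻¹)) + (w⁻¹ + w) := by ring
  simp only [hsplit, add_pow, sum_mul, mul_sum, dP3Terms, sum_sigma, sum_product]
  refine sum_congr rfl fun i hi => ?_
  rw [sum_comm]
  refine sum_congr rfl fun l hl => sum_congr rfl fun j hj => ?_
  rw [sum_comm]
  refine sum_congr rfl fun a ha => sum_congr rfl fun b hb => ?_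
  simp only [mem_range] at hi hl hj ha hb
  have hZ : dP3ExpZ ⟨i, l, j, a, b⟩ = ((l - a + (i - l - b) : ℕ) : ℤ) - (a + b : ℕ) := by
    simp only [dP3ExpZ]; omega
  have hW : dP3ExpW n ⟨i, l, j, a, b⟩ = ((b + (n - i - j) : ℕ) : ℤ) - (i - l - b + j : ℕ) := by
    simp only [dP3ExpW]; omega
  rw [hZ, hW, zpow_natCast_sub_natCast₀ hz, zpow_natCast_sub_natCast₀ hw, dP3Coeff]
  push_cast
  ring

theorem dP3_exp_mul_I_pow_eq_sum (n : ℕ) (θ φ : ℝ) :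
    (exp (I * θ) + exp (-(I * θ)) + exp (I * φ) + exp (-(I * φ)) + exp (I * (θ - φ)) +
        exp (-(I * (θ - φ)))) ^ n =
      ∑ x ∈ dP3Terms n,
        (dP3Coeff n x : ℂ) * exp (I * θ) ^ dP3ExpZ x * exp (I * φ) ^ dP3ExpW n x := by
  rw [← dP3_pow_eq_sum (Complex.exp_ne_zero _) (Complex.exp_ne_zero _)]
  simp only [exp_neg, mul_sub, exp_sub, inv_div]
  ring

theorem intChoose_natCast (a k : ℕ) : intChoose a k = a.choose k := by
  simp [intChoose]

theorem intChoose_of_neg (a : ℕ) {b : ℤ} (hb : b < 0) : intChoose a b = 0 := by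
  simp [intChoose, not_le.mpr hb]

theorem intChoose_of_lt {a : ℕ} {b : ℤ} (hab : (a : ℤ) < b) : intChoose a b = 0 := by
  rw [intChoose, if_pos (by omega)]
  exact Nat.choose_eq_zero_of_lt (by omega)

theorem sum_range_ite_natCast_eq_intChoose (m : ℕ) (s : ℤ) :
    ∑ a ∈ range (m + 1), (if (a : ℤ) = s then m.choose a else 0) = intChoose m s := by
  rcases lt_or_ge s 0 with hs | hs
  · rw [intChoose_of_neg m hs]
    exact sum_eq_zero fun a _ => if_neg (by omega)
  · lift s to ℕ using hs
    rw [intChoose_natCast]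
    simp only [Nat.cast_inj, sum_ite_eq', mem_range]
    split_ifs with hs
    · rfl
    · exact (Nat.choose_eq_zero_of_lt (by omega)).symm

theorem sum_range_ite_two_mul_eq_intChoose (m : ℕ) (t : ℤ) :
    ∑ a ∈ range (m + 1), (if 2 * (a : ℤ) = t then m.choose a else 0) =
      if 2 ∣ t then intChoose m (t / 2) else 0 := by
  split_ifs with ht
  · rw [← sum_range_ite_natCast_eq_intChoose]
    have h2 : ∀ a : ℕ, 2 * (a : ℤ) = t ↔ (a : ℤ) = t / 2 := by omega
    simp only [h2]
  · exact sum_eq_zero fun a _ => if_neg (by omega)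

theorem ite_dvd_intChoose_mul_ite_dvd_intChoose (n i l j : ℕ) (hli : l ≤ i) :
    ((if 2 ∣ (l : ℤ) + n - i - 2 * j then intChoose l (((l : ℤ) + n - i - 2 * j) / 2) else 0) *
      if 2 ∣ 2 * (i : ℤ) + 2 * j - l - n then
        intChoose (i - l) ((2 * (i : ℤ) + 2 * j - l - n) / 2) else 0) =
    if 2 ∣ i ∧ 2 ∣ l + n ∧ (n : ℤ) - i - 2 * j ≤ l ∧ (l : ℤ) ≤ n - 2 * j then
      intChoose l (((l : ℤ) + n - i - 2 * j) / 2) *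
        intChoose (i - l) ((2 * (i : ℤ) + 2 * j - l - n) / 2) else 0 := by
  rw [ite_zero_mul_ite_zero]
  by_cases hR : (n : ℤ) - i - 2 * j ≤ l ∧ (l : ℤ) ≤ n - 2 * j
  · exact if_congr (by omega) rfl rfl
  · simp only [hR, and_false, if_false, ite_eq_right_iff]
    intro _
    rcases not_and_or.mp hR with h | h
    · rw [intChoose_of_lt (b := ((l : ℤ) + n - i - 2 * j) / 2) (by omega), zero_mul]
    · rw [intChoose_of_lt (b := (2 * (i : ℤ) + 2 * j - l - n) / 2) (by omega), mul_zero]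

theorem sum_ite_dP3Coeff_fiber (n i l j : ℕ) (hli : l ≤ i) :
    ∑ a ∈ range (l + 1), ∑ b ∈ range (i - l + 1),
        (if dP3ExpZ ⟨i, l, j, a, b⟩ = 0 ∧ dP3ExpW n ⟨i, l, j, a, b⟩ = 0 then
          dP3Coeff n ⟨i, l, j, a, b⟩ else 0) =
      if 2 ∣ i ∧ 2 ∣ l + n ∧ (n : ℤ) - i - 2 * j ≤ l ∧ (l : ℤ) ≤ n - 2 * j then
        n.choose i * i.choose l * intChoose l (((l : ℤ) + n - i - 2 * j) / 2) *
          intChoose (i - l) ((2 * (i : ℤ) + 2 * j - l - n) / 2) * (n - i).choose j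
      else 0 := by
  have hcond : ∀ a b : ℕ, (dP3ExpZ ⟨i, l, j, a, b⟩ = 0 ∧ dP3ExpW n ⟨i, l, j, a, b⟩ = 0) ↔
      (2 * (a : ℤ) = l + n - i - 2 * j ∧ 2 * (b : ℤ) = 2 * i + 2 * j - l - n) := by
    intro a b
    simp only [dP3ExpZ, dP3ExpW]
    omega
  calc _ = n.choose i * i.choose l * (n - i).choose j *
        ((∑ a ∈ range (l + 1), if 2 * (a : ℤ) = l + n - i - 2 * j then l.choose a else 0) *
          ∑ b ∈ range (i - l + 1),
            if 2 * (b : ℤ) = 2 * i + 2 * j - l - n then (i - l).choose b else 0) := by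
        rw [sum_mul_sum]
        simp only [hcond, mul_sum, dP3Coeff, ite_and]
        refine sum_congr rfl fun a _ => sum_congr rfl fun b _ => ?_
        split_ifs <;> ring
    _ = _ := by
        rw [sum_range_ite_two_mul_eq_intChoose, sum_range_ite_two_mul_eq_intChoose,
          ite_dvd_intChoose_mul_ite_dvd_intChoose n i l j hli, mul_ite, mul_zero]
        exact if_congr Iff.rfl (by ring) rfl

theorem sum_dP3Coeff_filter_exp_eq_zero (n : ℕ) :
    ∑ x ∈ dP3Terms n with dP3ExpZ x = 0 ∧ dP3ExpW n x = 0, dP3Coeff n x =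
      ∑ i ∈ (range (n + 1)).filter (fun i => 2 ∣ i),
        ∑ l ∈ (range (i + 1)).filter (fun l => 2 ∣ (l + n)),
          ∑ j ∈ (range (n - i + 1)).filter
              (fun j : ℕ => (n : ℤ) - i - 2 * j ≤ l ∧ (l : ℤ) ≤ n - 2 * j),
            n.choose i * i.choose l * intChoose l (((l : ℤ) + n - i - 2 * j) / 2) *
              intChoose (i - l) ((2 * (i : ℤ) + 2 * j - l - n) / 2) * (n - i).choose j := by
  rw [sum_filter]
  simp only [dP3Terms, sum_sigma, sum_product, sum_filter]
  refine (sum_congr rfl fun i _ => sum_congr rfl fun l hl => sum_congr rfl fun j _ =>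
    sum_ite_dP3Coeff_fiber n i l j (Nat.lt_succ_iff.mp (mem_range.mp hl))).trans ?_
  simp only [ite_and, sum_ite_irrel, sum_const_zero]

theorem constant_term_dP3_general (n : ℕ) :
    ((1 : ℂ) / (2 * Real.pi) ^ 2) *
        (∫ θ in (0 : ℝ)..(2 * Real.pi), ∫ φ in (0 : ℝ)..(2 * Real.pi),
          (Complex.exp (Complex.I * (θ : ℂ)) + Complex.exp (-(Complex.I * (θ : ℂ))) +
            Complex.exp (Complex.I * (φ : ℂ)) + Complex.exp (-(Complex.I * (φ : ℂ))) +
            Complex.exp (Complex.I * ((θ : ℂ) - (φ : ℂ))) +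
            Complex.exp (-(Complex.I * ((θ : ℂ) - (φ : ℂ))))) ^ n)
      = ∑ i ∈ (Finset.range (n + 1)).filter (fun i => 2 ∣ i),
          ∑ l ∈ (Finset.range (i + 1)).filter (fun l => 2 ∣ (l + n)),
            ∑ j ∈ (Finset.range (n - i + 1)).filter
                (fun j : ℕ =>
                  (n : ℤ) - (i : ℤ) - 2 * (j : ℤ) ≤ (l : ℤ) ∧
                    (l : ℤ) ≤ (n : ℤ) - 2 * (j : ℤ)),
              (Nat.choose n i : ℂ) * (Nat.choose i l : ℂ) *
                (intChoose l (((l : ℤ) + n - i - 2 * j) / 2) : ℂ) *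
                (intChoose (i - l) ((2 * (i : ℤ) + 2 * j - l - n) / 2) : ℂ) *
                (Nat.choose (n - i) j : ℂ) := by
  simp only [dP3_exp_mul_I_pow_eq_sum, integral_integral_sum_mul_exp_mul_I_zpow]
  rw [one_div, inv_mul_cancel_left₀ (by simp [Real.pi_ne_zero])]
  exact_mod_cast sum_dP3Coeff_filter_exp_eq_zero n

/-- The constant Laurent coefficient of `(z + z⁻¹ + w + w⁻¹ + z w⁻¹ + z⁻¹ w)ⁿ`, computed
as a torus average, equals
`∑_{i,l,j} C(n,i) C(i,l) C(l,(l+n−i−2j)/2) C(i−l,(2i+2j−l−n)/2) C(n−i,j)`, the sum running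
over `0 ≤ i ≤ n`, `0 ≤ l ≤ i`, `0 ≤ j ≤ n−i` with `i` even, `l + n` even and
`n − i − 2j ≤ l ≤ n − 2j` (with `C(a,b) = 0` when `b > a` or `b < 0`). -/
theorem constant_term_dP3 (n : ℕ) (hn : 1 ≤ n) :
    ((1 : ℂ) / (2 * Real.pi) ^ 2) *
        (∫ θ in (0 : ℝ)..(2 * Real.pi), ∫ φ in (0 : ℝ)..(2 * Real.pi),
          (Complex.exp (Complex.I * (θ : ℂ)) + Complex.exp (-(Complex.I * (θ : ℂ))) +
            Complex.exp (Complex.I * (φ : ℂ)) + Complex.exp (-(Complex.I * (φ : ℂ))) +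
            Complex.exp (Complex.I * ((θ : ℂ) - (φ : ℂ))) +
            Complex.exp (-(Complex.I * ((θ : ℂ) - (φ : ℂ))))) ^ n)
      = ∑ i ∈ (Finset.range (n + 1)).filter (fun i => 2 ∣ i),
          ∑ l ∈ (Finset.range (i + 1)).filter (fun l => 2 ∣ (l + n)),
            ∑ j ∈ (Finset.range (n - i + 1)).filter
                (fun j : ℕ =>
                  (n : ℤ) - (i : ℤ) - 2 * (j : ℤ) ≤ (l : ℤ) ∧
                    (l : ℤ) ≤ (n : ℤ) - 2 * (j : ℤ)),
              (Nat.choose n i : ℂ) * (Nat.choose i l : ℂ) *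
                (intChoose l (((l : ℤ) + n - i - 2 * j) / 2) : ℂ) *
                (intChoose (i - l) ((2 * (i : ℤ) + 2 * j - l - n) / 2) : ℂ) *
                (Nat.choose (n - i) j : ℂ) :=
  constant_term_dP3_general n
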